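/- On (G ⋉ 𝔤) ⋉ (𝔤 ⋉ 𝔤), the multiplication (g,ξ,ξ̄,ξ̃)(h,η,η̄,η̃) := (gh, Ad_{h⁻¹}ξ + η, Ad_{h⁻¹}ξ̄ + η̄, Ad_{h⁻¹}(ξ̃ + [ξ̄, Ad_h η]) + η̃) defines a group structure with identity (e,0,0,0) and inverse (g,ξ,ξ̄,ξ̃)⁻¹ = (g⁻¹, −Ad_g ξ, −Ad_g ξ̄, −Ad_g(ξ̃ + [ξ,ξ̄])). -/
import Mathlib


/-!
STATEMENT 3. The stated multiplication on `(G ⋉ 𝔤) ⋉ (𝔤 ⋉ 𝔤)` (i.e. on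
`G × 𝔤 × 𝔤 × 𝔤`, arising from the iterated left trivialization of `TTG`)
defines a group structure with identity `(e,0,0,0)` and the stated inverse.
`Ad` is the adjoint representation (acting by Lie algebra automorphisms). -/


section helper
variable {G : Type*} [Group G] {𝔤 : Type*} [LieRing 𝔤] [LieAlgebra ℝ 𝔤]
  (Ad : G →* (𝔤 ≃ₗ[ℝ] 𝔤))

lemma Ad_one_apply (x : 𝔤) : Ad 1 x = x := by rw [map_one]; rfl

lemma Ad_mul_apply (g h : G) (x : 𝔤) : Ad (g * h) x = Ad g (Ad h x) := by
  rw [map_mul]; rfl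

lemma Ad_inv_apply (g : G) (x : 𝔤) : Ad g⁻¹ (Ad g x) = x := by
  rw [← Ad_mul_apply, inv_mul_cancel, Ad_one_apply]

lemma Ad_inv_apply' (g : G) (x : 𝔤) : Ad g (Ad g⁻¹ x) = x := by
  rw [← Ad_mul_apply, mul_inv_cancel, Ad_one_apply]

lemma one_LE_apply (x : 𝔤) : (1 : 𝔤 ≃ₗ[ℝ] 𝔤) x = x := rfl

end helper

theorem double_tangent_group_structure
    {G : Type*} [Group G] {𝔤 : Type*} [LieRing 𝔤] [LieAlgebra ℝ 𝔤]
    (Ad : G →* (𝔤 ≃ₗ[ℝ] 𝔤))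
    (hAdBracket : ∀ (g : G) (ξ η : 𝔤), Ad g ⁅ξ, η⁆ = ⁅Ad g ξ, Ad g η⁆)
    (mul : (G × 𝔤 × 𝔤 × 𝔤) → (G × 𝔤 × 𝔤 × 𝔤) → (G × 𝔤 × 𝔤 × 𝔤))
    (hmul : ∀ a b : G × 𝔤 × 𝔤 × 𝔤,
      mul a b = (a.1 * b.1,
        Ad b.1⁻¹ a.2.1 + b.2.1,
        Ad b.1⁻¹ a.2.2.1 + b.2.2.1,
        Ad b.1⁻¹ (a.2.2.2 + ⁅a.2.2.1, Ad b.1 b.2.1⁆) + b.2.2.2))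
    (inv : (G × 𝔤 × 𝔤 × 𝔤) → (G × 𝔤 × 𝔤 × 𝔤))
    (hinv : ∀ a : G × 𝔤 × 𝔤 × 𝔤,
      inv a = (a.1⁻¹, -(Ad a.1 a.2.1), -(Ad a.1 a.2.2.1),
        -(Ad a.1 (a.2.2.2 + ⁅a.2.1, a.2.2.1⁆)))) :
    (∀ a b c : G × 𝔤 × 𝔤 × 𝔤, mul (mul a b) c = mul a (mul b c)) ∧
      (∀ a : G × 𝔤 × 𝔤 × 𝔤,
        mul ((1 : G), (0 : 𝔤), (0 : 𝔤), (0 : 𝔤)) a = a ∧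
          mul a ((1 : G), (0 : 𝔤), (0 : 𝔤), (0 : 𝔤)) = a) ∧
      (∀ a : G × 𝔤 × 𝔤 × 𝔤,
        mul a (inv a) = ((1 : G), (0 : 𝔤), (0 : 𝔤), (0 : 𝔤)) ∧
          mul (inv a) a = ((1 : G), (0 : 𝔤), (0 : 𝔤), (0 : 𝔤))) := by
  refine ⟨?_, ?_, ?_⟩
  · intro a b c
    simp only [hmul, mul_inv_rev, Ad_mul_apply, map_add, hAdBracket, add_lie, lie_add,
      Ad_inv_apply, Prod.mk.injEq]
    exact ⟨mul_assoc _ _ _, by abel, by abel, by abel⟩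
  · intro a
    simp only [hmul, one_mul, mul_one, inv_one, map_zero, map_one, Ad_one_apply, add_zero,
      zero_add, lie_zero, zero_lie, one_LE_apply, Prod.mk.eta, and_self]
  · intro a
    simp only [hmul, hinv, mul_inv_cancel, inv_mul_cancel, inv_inv, Ad_inv_apply,
      Ad_inv_apply', map_neg, map_add, lie_neg, neg_lie, hAdBracket, Prod.mk.injEq]
    refine ⟨⟨trivial, by abel, by abel, ?_⟩, trivial, by abel, by abel, ?_⟩
    · rw [← lie_skew ((Ad a.1) a.2.1) ((Ad a.1) a.2.2.1)]
      abel
    · rw [← lie_skew a.2.1 a.2.2.1]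
      abel
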